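/- Let T be a Tambara functor on a finite group G. Every maximal ideal 𝔪 ⊊ T is prime. -/

import Mathlib

set_option autoImplicit false

/-! Finite G-sets -/

structure GSet (G : Type) [Group G] : Type 1 where
  carrier : Type
  [mulAction : MulAction G carrier]
  [finite : Finite carrier]

attribute [instance] GSet.mulAction GSet.finite

/-- Equivariant maps of finite `G`-sets. -/
structure GSetHom {G : Type} [Group G] (X Y : GSet G) : Type where
  toFun : X.carrier → Y.carrier
  map_smul : ∀ (g : G) (x : X.carrier), toFun (g • x) = g • toFun x

namespace GSetHom

variable {G : Type} [Group G]

def id (X : GSet G) : GSetHom X X := ⟨fun x => x, fun _ _ => rfl⟩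

def comp {X Y Z : GSet G} (g : GSetHom Y Z) (f : GSetHom X Y) : GSetHom X Z :=
  ⟨fun x => g.toFun (f.toFun x), fun a x => by
    show g.toFun (f.toFun (a • x)) = a • g.toFun (f.toFun x)
    rw [f.map_smul, g.map_smul]⟩

end GSetHom

namespace GSet

variable {G : Type} [Group G]

/-- Binary disjoint union of `G`-sets. -/
def sum (X Y : GSet G) : GSet G where
  carrier := X.carrier ⊕ Y.carrier

def inl (X Y : GSet G) : GSetHom X (X.sum Y) := ⟨Sum.inl, fun _ _ => rfl⟩

def inr (X Y : GSet G) : GSetHom Y (X.sum Y) := ⟨Sum.inr, fun _ _ => rfl⟩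

instance : MulAction G Empty where
  smul _ x := x.elim
  one_smul x := x.elim
  mul_smul _ _ x := x.elim

/-- The empty `G`-set. -/
def empty (G : Type) [Group G] : GSet G where
  carrier := Empty

/-- Finite disjoint unions of `G`-sets. -/
def sigma {n : ℕ} (Xs : Fin n → GSet G) : GSet G where
  carrier := Σ i, (Xs i).carrier

def sigmaIncl {n : ℕ} (Xs : Fin n → GSet G) (i : Fin n) : GSetHom (Xs i) (sigma Xs) :=
  ⟨fun x => ⟨i, x⟩, fun _ _ => rfl⟩

/-- The canonical pullback of two `G`-maps. -/
def pullback {X Y Z : GSet G} (f : GSetHom X Z) (g : GSetHom Y Z) : GSet G where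
  carrier := { q : X.carrier × Y.carrier // f.toFun q.1 = g.toFun q.2 }
  mulAction :=
  { smul := fun a q => ⟨a • q.val, by
      show f.toFun (a • q.val.1) = g.toFun (a • q.val.2)
      rw [f.map_smul, g.map_smul, q.property]⟩
    one_smul := fun q => Subtype.ext (one_smul G q.val)
    mul_smul := fun a b q => Subtype.ext (mul_smul a b q.val) }

def pbFst {X Y Z : GSet G} (f : GSetHom X Z) (g : GSetHom Y Z) :
    GSetHom (pullback f g) X := ⟨fun q => q.val.1, fun _ _ => rfl⟩

def pbSnd {X Y Z : GSet G} (f : GSetHom X Z) (g : GSetHom Y Z) :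
    GSetHom (pullback f g) Y := ⟨fun q => q.val.2, fun _ _ => rfl⟩

/-- The complement of the image of a `G`-map, as a `G`-set. -/
def compl {X Y : GSet G} (f : GSetHom X Y) : GSet G where
  carrier := { y : Y.carrier // ∀ x, f.toFun x ≠ y }
  mulAction :=
  { smul := fun g y => ⟨g • y.val, fun x h => y.property (g⁻¹ • x) (by
      rw [f.map_smul, h, inv_smul_smul])⟩
    one_smul := fun y => Subtype.ext (one_smul G y.val)
    mul_smul := fun a b y => Subtype.ext (mul_smul a b y.val) }

def complIncl {X Y : GSet G} (f : GSetHom X Y) : GSetHom (compl f) Y :=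
  ⟨fun y => y.val, fun _ _ => rfl⟩

/-- Points of Tambara's dependent product `Π_f(A)`: pairs `(y, σ)` of a point `y : Y`
and a section `σ` of `p` on the fiber `f⁻¹(y)` (encoded as an `Option`-valued function
supported exactly on the fiber). -/
def PiProp {X Y A : GSet G} (f : GSetHom X Y) (p : GSetHom A X)
    (s : Y.carrier × (X.carrier → Option A.carrier)) : Prop :=
  (∀ x, (s.2 x).isSome = true ↔ f.toFun x = s.1) ∧
  (∀ x a, s.2 x = some a → p.toFun a = x)

def PiCar {X Y A : GSet G} (f : GSetHom X Y) (p : GSetHom A X) : Type :=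
  { s : Y.carrier × (X.carrier → Option A.carrier) // PiProp f p s }

instance optionFinite {α : Type} [Finite α] : Finite (Option α) :=
  Finite.of_equiv _ (Equiv.optionEquivSumPUnit.{0,0} α).symm

instance piFinite {X Y A : GSet G} (f : GSetHom X Y) (p : GSetHom A X) :
    Finite (PiCar f p) := by
  unfold PiCar; infer_instance

def piSmul {X Y A : GSet G} (f : GSetHom X Y) (p : GSetHom A X) (g : G)
    (s : PiCar f p) : PiCar f p :=
  ⟨(g • s.val.1, fun x => (s.val.2 (g⁻¹ • x)).map (g • ·)), by
    constructor
    · intro x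
      rw [Option.isSome_map, s.property.1 (g⁻¹ • x), f.map_smul]
      constructor
      · intro h; rw [← h, smul_inv_smul]
      · intro h; rw [h, inv_smul_smul]
    · intro x a ha
      rcases Option.map_eq_some_iff.mp ha with ⟨b, hb, rfl⟩
      rw [p.map_smul, s.property.2 _ _ hb, smul_inv_smul]⟩

instance piAction {X Y A : GSet G} (f : GSetHom X Y) (p : GSetHom A X) :
    MulAction G (PiCar f p) where
  smul := piSmul f p
  one_smul s := by
    apply Subtype.ext
    refine Prod.ext (one_smul G s.val.1) ?_
    funext x
    show (s.val.2 ((1:G)⁻¹ • x)).map ((1:G) • ·) = s.val.2 x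
    rw [inv_one, one_smul]
    cases h : s.val.2 x <;> simp [one_smul]
  mul_smul a b s := by
    apply Subtype.ext
    refine Prod.ext (mul_smul a b s.val.1) ?_
    funext x
    show (s.val.2 ((a * b)⁻¹ • x)).map ((a * b) • ·)
        = ((s.val.2 (b⁻¹ • (a⁻¹ • x))).map (b • ·)).map (a • ·)
    rw [Option.map_map, mul_inv_rev, mul_smul]
    cases h : s.val.2 (b⁻¹ • a⁻¹ • x) <;> simp [mul_smul, Function.comp]

/-- Tambara's dependent product `Π_f(A)` as a `G`-set. -/
def piObj {X Y A : GSet G} (f : GSetHom X Y) (p : GSetHom A X) : GSet G where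
  carrier := PiCar f p

/-- The projection `π : Π_f(A) → Y`. -/
def piPr {X Y A : GSet G} (f : GSetHom X Y) (p : GSetHom A X) :
    GSetHom (piObj f p) Y := ⟨fun s => s.val.1, fun _ _ => rfl⟩

theorem optGet {α : Type} {o : Option α} {a : α} (h : o = some a) :
    ∀ hs : o.isSome = true, o.get hs = a := by subst h; intro _; rfl

/-- The evaluation map `λ : X ×_Y Π_f(A) → A`, `(x, (y, σ)) ↦ σ(x)`. -/
def piEval {X Y A : GSet G} (f : GSetHom X Y) (p : GSetHom A X) :
    GSetHom (pullback f (piPr f p)) A where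
  toFun z := (z.val.2.val.2 z.val.1).get (by
    rw [z.val.2.property.1 z.val.1]; exact z.property)
  map_smul g z := by
    have hs : (z.val.2.val.2 z.val.1).isSome = true := by
      rw [z.val.2.property.1 z.val.1]; exact z.property
    obtain ⟨a, ha⟩ := Option.isSome_iff_exists.mp hs
    have h1 : z.val.2.val.2 z.val.1 = some a := ha
    have h2 : (g • z).val.2.val.2 (g • z).val.1 = some (g • a) := by
      show (z.val.2.val.2 (g⁻¹ • (g • z.val.1))).map (g • ·) = some (g • a)
      rw [inv_smul_smul, h1]; rfl
    simp only [optGet h2, optGet h1]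

end GSet

namespace GSet

/-- A transitive (nonempty) finite `G`-set. -/
def IsTransitive {G : Type} [Group G] (X : GSet G) : Prop :=
  Nonempty X.carrier ∧ MulAction.IsPretransitive G X.carrier

end GSet

/-! Tambara functors -/

/-- The underlying system of commutative rings of a Tambara functor. -/
structure TamData (G : Type) [Group G] : Type 1 where
  obj : GSet G → Type
  ring : ∀ X, CommRing (obj X)

attribute [instance] TamData.ring

/-- A Tambara functor on the finite group `G`: a system of commutative rings `obj X`
indexed by finite `G`-sets, together with restrictions `res`, additive transfers `tr`
and multiplicative transfers `nm`, functorial, additive, satisfying the Mackey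
base-change conditions, the projection formula, and Tambara's distributive law. -/
structure TambaraFunctor (G : Type) [Group G] extends TamData G where
  res : ∀ {X Y : GSet G}, GSetHom X Y → (obj Y →+* obj X)
  tr : ∀ {X Y : GSet G}, GSetHom X Y → (obj X →+ obj Y)
  nm : ∀ {X Y : GSet G}, GSetHom X Y → (obj X →* obj Y)
  res_id : ∀ {X : GSet G} (x : obj X), res (GSetHom.id X) x = x
  res_comp : ∀ {X Y Z : GSet G} (f : GSetHom X Y) (g : GSetHom Y Z) (z : obj Z),
    res f (res g z) = res (g.comp f) z
  tr_id : ∀ {X : GSet G} (x : obj X), tr (GSetHom.id X) x = x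
  tr_comp : ∀ {X Y Z : GSet G} (f : GSetHom X Y) (g : GSetHom Y Z) (x : obj X),
    tr g (tr f x) = tr (g.comp f) x
  nm_id : ∀ {X : GSet G} (x : obj X), nm (GSetHom.id X) x = x
  nm_comp : ∀ {X Y Z : GSet G} (f : GSetHom X Y) (g : GSetHom Y Z) (x : obj X),
    nm g (nm f x) = nm (g.comp f) x
  /-- additivity on binary disjoint unions -/
  add_bij : ∀ X Y : GSet G, Function.Bijective
    (fun t : obj (X.sum Y) => (res (GSet.inl X Y) t, res (GSet.inr X Y) t))
  /-- `T(∅)` is the zero ring -/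
  empty_subsingleton : ∀ x y : obj (GSet.empty G), x = y
  /-- Mackey base change for the additive transfer -/
  tr_bc : ∀ {X Y Z : GSet G} (f : GSetHom X Z) (g : GSetHom Y Z) (x : obj X),
    res g (tr f x) = tr (GSet.pbSnd f g) (res (GSet.pbFst f g) x)
  /-- Mackey base change for the multiplicative transfer -/
  nm_bc : ∀ {X Y Z : GSet G} (f : GSetHom X Z) (g : GSetHom Y Z) (x : obj X),
    res g (nm f x) = nm (GSet.pbSnd f g) (res (GSet.pbFst f g) x)
  /-- the projection formula -/
  proj_formula : ∀ {X Y : GSet G} (f : GSetHom X Y) (a : obj X) (b : obj Y),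
    tr f (a * res f b) = tr f a * b
  /-- the norm of zero is the additive transfer of `1` from the complement of the image -/
  nm_zero : ∀ {X Y : GSet G} (f : GSetHom X Y), nm f (0 : obj X) = tr (GSet.complIncl f) 1
  /-- Tambara's distributive law, via the canonical exponential diagram on `Π_f(A)` -/
  distrib : ∀ {X Y A : GSet G} (f : GSetHom X Y) (p : GSetHom A X) (a : obj A),
    nm f (tr p a) = tr (GSet.piPr f p)
      (nm (GSet.pbSnd f (GSet.piPr f p)) (res (GSet.piEval f p) a))

namespace TambaraFunctor

variable {G : Type} [Group G]

/-- `f_!(x) = f_•(x) - f_•(0)`. -/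
def shriek (T : TambaraFunctor G) {X Y : GSet G} (f : GSetHom X Y) (x : T.obj X) :
    T.obj Y := T.nm f x - T.nm f 0

end TambaraFunctor

/-- A morphism of Tambara functors: a family of ring homomorphisms natural with respect
to restrictions, additive transfers and multiplicative transfers. -/
structure TamHom {G : Type} [Group G] (T S : TambaraFunctor G) where
  app : ∀ X : GSet G, T.obj X →+* S.obj X
  app_res : ∀ {X Y : GSet G} (f : GSetHom X Y) (y : T.obj Y),
    app X (T.res f y) = S.res f (app Y y)
  app_tr : ∀ {X Y : GSet G} (f : GSetHom X Y) (x : T.obj X),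
    app Y (T.tr f x) = S.tr f (app X x)
  app_nm : ∀ {X Y : GSet G} (f : GSetHom X Y) (x : T.obj X),
    app Y (T.nm f x) = S.nm f (app X x)

namespace TambaraFunctor

variable {G : Type} [Group G]

/-- An ideal of a Tambara functor: a family of ideals closed under restrictions,
additive transfers, and satisfying `f_•(𝔦(X)) ⊆ f_•(0) + 𝔦(Y)`
(equivalently, closed under `f_!`). -/
structure IsIdeal (T : TambaraFunctor G) (I : ∀ X : GSet G, Ideal (T.obj X)) : Prop where
  res_mem : ∀ {X Y : GSet G} (f : GSetHom X Y) {y : T.obj Y}, y ∈ I Y → T.res f y ∈ I X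
  tr_mem : ∀ {X Y : GSet G} (f : GSetHom X Y) {x : T.obj X}, x ∈ I X → T.tr f x ∈ I Y
  shriek_mem : ∀ {X Y : GSet G} (f : GSetHom X Y) {x : T.obj X},
    x ∈ I X → T.shriek f x ∈ I Y

/-- The ideal generated by a family of subsets: the intersection of all ideals
containing it. -/
def gen (T : TambaraFunctor G) (S : ∀ X : GSet G, Set (T.obj X)) (X : GSet G) :
    Ideal (T.obj X) :=
  ⨅ (I : ∀ Y : GSet G, Ideal (T.obj Y)) (_ : T.IsIdeal I) (_ : ∀ Y, S Y ⊆ ↑(I Y)), I X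

/-- The family of subsets consisting of the single element `a ∈ T(A)`. -/
def single (T : TambaraFunctor G) (A : GSet G) (a : T.obj A) (X : GSet G) :
    Set (T.obj X) := { x | ∃ h : A = X, h ▸ a = x }

/-- The principal ideal `⟨a⟩` generated by `a ∈ T(A)`. -/
def principal (T : TambaraFunctor G) (A : GSet G) (a : T.obj A) :
    ∀ X : GSet G, Ideal (T.obj X) := T.gen (T.single A a)

/-- The defining set of the product of two ideals. -/
def mulSet (T : TambaraFunctor G) (I J : ∀ X : GSet G, Ideal (T.obj X)) (X : GSet G) :
    Set (T.obj X) :=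
  { x | ∃ (A : GSet G) (p : GSetHom A X) (a b : T.obj A),
      a ∈ I A ∧ b ∈ J A ∧ x = T.tr p (a * b) }

/-- The product of two ideals of a Tambara functor. -/
def mulIdl (T : TambaraFunctor G) (I J : ∀ X : GSet G, Ideal (T.obj X)) (X : GSet G) :
    Ideal (T.obj X) := Ideal.span (T.mulSet I J X)

/-- Iterated products of ideals. -/
def mulMulti (T : TambaraFunctor G) :
    List (∀ X : GSet G, Ideal (T.obj X)) → ∀ X : GSet G, Ideal (T.obj X)
  | [] => fun _ => ⊤
  | I :: ls => T.mulIdl I (T.mulMulti ls)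

/-- A prime ideal of a Tambara functor. -/
structure IsPrime (T : TambaraFunctor G) (P : ∀ X : GSet G, Ideal (T.obj X)) : Prop where
  isIdeal : T.IsIdeal P
  ne_top : ∃ X : GSet G, P X ≠ ⊤
  mem_or_mem : ∀ {X Y : GSet G}, X.IsTransitive → Y.IsTransitive →
    ∀ {a : T.obj X} {b : T.obj Y},
      (∀ Z : GSet G, T.mulIdl (T.principal X a) (T.principal Y b) Z ≤ P Z) →
      a ∈ P X ∨ b ∈ P Y

/-- A maximal ideal of a Tambara functor. -/
structure IsMaximal (T : TambaraFunctor G) (M : ∀ X : GSet G, Ideal (T.obj X)) : Prop where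
  isIdeal : T.IsIdeal M
  ne_top : ∃ X : GSet G, M X ≠ ⊤
  eq_of_le : ∀ K : ∀ X : GSet G, Ideal (T.obj X), T.IsIdeal K →
    (∀ X, M X ≤ K X) → (K = M ∨ ∀ X, K X = ⊤)

end TambaraFunctor

namespace GSet

/-- The `G`-set `G/e`, i.e. `G` with the left regular action. -/
def regular (G : Type) [Group G] [Finite G] : GSet G where
  carrier := G

/-- Right multiplication `G/e → G/e`, an equivariant map. -/
def rightMul {G : Type} [Group G] [Finite G] (g : G) :
    GSetHom (regular G) (regular G) :=
  ⟨fun x => (id x : G) * g, fun a x => mul_assoc a x g⟩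

end GSet

/-! The levelwise sum `𝔦 + 𝔧` of two ideals is again an ideal. The only nontrivial point is
closure under `f_!`: for `x ∈ 𝔦(S)` and `y ∈ 𝔧(S)`, Tambara's distributive law, applied to the
fold map `S ⊔ S → S`, writes `f_•(x + y)` as a transfer of a norm `g_•(z)` along a map whose
source `Q` splits as `Q₁ ⊔ Q₂` with `z|Q₁ ∈ 𝔦` and `z|Q₂ ∈ 𝔧`. Since `T(Q) = T(Q₁) × T(Q₂)`, the
element `z` is a product of norms from `Q₁` and `Q₂`, and `uv - u₀v₀ = u(v - v₀) + (u - u₀)v₀`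
puts `g_!(z)` in `𝔦 + 𝔧`.

Given this, the ring-theoretic argument applies: if `a, b ∉ 𝔪` then maximality forces
`𝔪 + ⟨a⟩ = 𝔪 + ⟨b⟩ = T`, and so `𝔪 ⊇ 𝔪 + ⟨a⟩⟨b⟩ = T`. -/

namespace GSetHom

variable {G : Type} [Group G] {X Y A B Q : GSet G}

@[ext]
theorem ext {f g : GSetHom X Y} (h : f.toFun = g.toFun) : f = g := by
  cases f; cases g; cases h; rfl

def sumElim (il : GSetHom A Q) (ir : GSetHom B Q) : GSetHom (A.sum B) Q :=
  ⟨Sum.elim il.toFun ir.toFun, by rintro g (a | b); exacts [il.map_smul g a, ir.map_smul g b]⟩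

noncomputable def invOfBijective (f : GSetHom X Y) (hf : Function.Bijective f.toFun) :
    GSetHom Y X :=
  ⟨(Equiv.ofBijective _ hf).symm, fun g y => hf.1 (by
    rw [f.map_smul, Equiv.ofBijective_apply_symm_apply f.toFun hf,
      Equiv.ofBijective_apply_symm_apply f.toFun hf])⟩

theorem comp_invOfBijective (f : GSetHom X Y) (hf : Function.Bijective f.toFun) :
    f.comp (f.invOfBijective hf) = id Y :=
  ext (funext (Equiv.ofBijective _ hf).apply_symm_apply)

end GSetHom

namespace GSet

variable {G : Type} [Group G] {X Y A Q : GSet G}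

def diag (i : GSetHom A Q) : GSetHom A (pullback i i) :=
  ⟨fun a => ⟨(a, a), rfl⟩, fun _ _ => rfl⟩

theorem pbSnd_comp_diag (i : GSetHom A Q) : (pbSnd i i).comp (diag i) = GSetHom.id A := rfl

theorem pbFst_eq_pbSnd {i : GSetHom A Q} (hi : Function.Injective i.toFun) :
    pbFst i i = pbSnd i i :=
  GSetHom.ext (funext fun δ => hi δ.property)

theorem diag_comp_pbSnd {i : GSetHom A Q} (hi : Function.Injective i.toFun) :
    (diag i).comp (pbSnd i i) = GSetHom.id (pullback i i) :=
  GSetHom.ext (funext fun δ => Subtype.ext (Prod.ext (hi δ.property).symm rfl))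

theorem diag_surjective {i : GSetHom A Q} (hi : Function.Injective i.toFun) :
    Function.Surjective (diag i).toFun :=
  fun δ => ⟨δ.val.2, congrFun (congrArg GSetHom.toFun (diag_comp_pbSnd hi)) δ⟩

def fold (X : GSet G) : GSetHom (X.sum X) X :=
  (GSetHom.id X).sumElim (GSetHom.id X)

theorem bijective_sumElim_pbSnd (lam : GSetHom Q (X.sum Y)) :
    Function.Bijective ((pbSnd (inl X Y) lam).sumElim (pbSnd (inr X Y) lam)).toFun := by
  constructor
  · rintro (⟨⟨x₁, q₁⟩, h₁⟩ | ⟨⟨y₁, q₁⟩, h₁⟩) (⟨⟨x₂, q₂⟩, h₂⟩ | ⟨⟨y₂, q₂⟩, h₂⟩) (rfl : q₁ = q₂)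
    · cases Sum.inl.inj (h₁.trans h₂.symm); rfl
    · exact absurd (h₁.trans h₂.symm) Sum.inl_ne_inr
    · exact absurd (h₁.trans h₂.symm) Sum.inr_ne_inl
    · cases Sum.inr.inj (h₁.trans h₂.symm); rfl
  · intro q
    rcases hq : lam.toFun q with x | y
    exacts [⟨Sum.inl ⟨(x, q), hq.symm⟩, rfl⟩, ⟨Sum.inr ⟨(y, q), hq.symm⟩, rfl⟩]

end GSet

namespace TambaraFunctor

variable {G : Type} [Group G] (T : TambaraFunctor G) {X Y A B Q V : GSet G}

theorem obj_eq_of_isEmpty (hZ : IsEmpty X.carrier) (u v : T.obj X) : u = v := by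
  obtain ⟨t, ht⟩ := (T.add_bij X X).2 (u, v)
  have hinl : GSet.inl X X = GSet.inr X X := GSetHom.ext (funext hZ.elim)
  simp only [Prod.mk.injEq] at ht
  rw [← ht.1, ← ht.2, hinl]

theorem nm_zero_of_surjective {f : GSetHom X Y} (hf : Function.Surjective f.toFun) :
    T.nm f 0 = 0 := by
  have hcompl : IsEmpty (GSet.compl f).carrier :=
    ⟨fun ⟨y, hy⟩ => (hf y).elim fun x hx => hy x hx⟩
  rw [T.nm_zero, T.obj_eq_of_isEmpty hcompl 1 0, map_zero]

theorem res_nm_of_isEmpty_pullback (i : GSetHom A Q) (j : GSetHom B Q)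
    (h : IsEmpty (GSet.pullback i j).carrier) (w : T.obj A) : T.res j (T.nm i w) = 1 := by
  rw [T.nm_bc, T.obj_eq_of_isEmpty h (T.res _ w) 1, map_one]

theorem res_tr_of_isEmpty_pullback (i : GSetHom A Q) (j : GSetHom B Q)
    (h : IsEmpty (GSet.pullback i j).carrier) (w : T.obj A) : T.res j (T.tr i w) = 0 := by
  rw [T.tr_bc, T.obj_eq_of_isEmpty h (T.res _ w) 0, map_zero]

theorem res_injective_of_comp_eq_id {f : GSetHom X Y} {g : GSetHom Y X}
    (h : f.comp g = GSetHom.id Y) : Function.Injective (T.res f) := fun u v huv => by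
  rw [← T.res_id u, ← T.res_id v, ← h, ← T.res_comp, ← T.res_comp, huv]

theorem eq_of_res_eq_of_res_eq {il : GSetHom A Q} {ir : GSetHom B Q}
    (hQ : Function.Bijective (il.sumElim ir).toFun) {z₁ z₂ : T.obj Q}
    (hl : T.res il z₁ = T.res il z₂) (hr : T.res ir z₁ = T.res ir z₂) : z₁ = z₂ :=
  T.res_injective_of_comp_eq_id ((il.sumElim ir).comp_invOfBijective hQ)
    ((T.add_bij A B).1 (by simp only [T.res_comp]; exact Prod.ext hl hr))

/-- For injective `i` the diagonal `A → A ×_Q A` is an isomorphism, and this element is a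
preimage of `v` under `i^* ∘ i_•`. -/
def nmPreimage (i : GSetHom A Q) (v : T.obj A) : T.obj A :=
  T.res (GSet.diag i) (T.nm (GSet.diag i) v)

theorem res_nm_nmPreimage {i : GSetHom A Q} (hi : Function.Injective i.toFun) (v : T.obj A) :
    T.res i (T.nm i (T.nmPreimage i v)) = v := by
  rw [nmPreimage, T.nm_bc, GSet.pbFst_eq_pbSnd hi, T.res_comp, GSet.diag_comp_pbSnd hi,
    T.res_id, T.nm_comp, GSet.pbSnd_comp_diag, T.nm_id]

theorem nmPreimage_zero {i : GSetHom A Q} (hi : Function.Injective i.toFun) :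
    T.nmPreimage i 0 = 0 := by
  rw [nmPreimage, T.nm_zero_of_surjective (GSet.diag_surjective hi), map_zero]

variable {T} {I J : ∀ X : GSet G, Ideal (T.obj X)}

theorem IsIdeal.nmPreimage_mem (hI : T.IsIdeal I) {i : GSetHom A Q}
    (hi : Function.Injective i.toFun) {v : T.obj A} (hv : v ∈ I A) : T.nmPreimage i v ∈ I A := by
  have hshriek : T.nm (GSet.diag i) v = T.shriek (GSet.diag i) v := by
    rw [shriek, T.nm_zero_of_surjective (GSet.diag_surjective hi), sub_zero]
  rw [nmPreimage, hshriek]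
  exact hI.res_mem _ (hI.shriek_mem _ hv)

theorem shriek_mem_sup_of_res_mem (hI : T.IsIdeal I) (hJ : T.IsIdeal J) {il : GSetHom A Q}
    {ir : GSetHom B Q} (hQ : Function.Bijective (il.sumElim ir).toFun) (g : GSetHom Q V)
    {z : T.obj Q} (hzl : T.res il z ∈ I A) (hzr : T.res ir z ∈ J B) :
    T.shriek g z ∈ I V ⊔ J V := by
  have hil : Function.Injective il.toFun := hQ.1.comp Sum.inl_injective
  have hir : Function.Injective ir.toFun := hQ.1.comp Sum.inr_injective
  have hlr : IsEmpty (GSet.pullback il ir).carrier :=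
    ⟨fun ⟨⟨a, b⟩, h⟩ => Sum.inl_ne_inr (hQ.1 (a₁ := .inl a) (a₂ := .inr b) h)⟩
  have hrl : IsEmpty (GSet.pullback ir il).carrier :=
    ⟨fun ⟨⟨b, a⟩, h⟩ => Sum.inr_ne_inl (hQ.1 (a₁ := .inr b) (a₂ := .inl a) h)⟩
  have hsplit : ∀ w : T.obj Q,
      w = T.nm il (T.nmPreimage il (T.res il w)) * T.nm ir (T.nmPreimage ir (T.res ir w)) :=
    fun w => T.eq_of_res_eq_of_res_eq hQ
      (by rw [map_mul, T.res_nm_nmPreimage hil, T.res_nm_of_isEmpty_pullback _ _ hrl, mul_one])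
      (by rw [map_mul, T.res_nm_nmPreimage hir, T.res_nm_of_isEmpty_pullback _ _ hlr, one_mul])
  have hnm : ∀ w : T.obj Q, T.nm g w = T.nm (g.comp il) (T.nmPreimage il (T.res il w))
      * T.nm (g.comp ir) (T.nmPreimage ir (T.res ir w)) := fun w => by
    rw [← T.nm_comp, ← T.nm_comp, ← map_mul, ← hsplit]
  have hl := hI.shriek_mem (g.comp il) (hI.nmPreimage_mem hil hzl)
  have hr := hJ.shriek_mem (g.comp ir) (hJ.nmPreimage_mem hir hzr)
  rw [shriek] at hl hr ⊢
  rw [hnm z, hnm 0, map_zero, map_zero, T.nmPreimage_zero hil, T.nmPreimage_zero hir]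
  set u := T.nm (g.comp il) (T.nmPreimage il (T.res il z))
  set v := T.nm (g.comp ir) (T.nmPreimage ir (T.res ir z))
  rw [show u * v - T.nm (g.comp il) 0 * T.nm (g.comp ir) 0
      = u * (v - T.nm (g.comp ir) 0) + (u - T.nm (g.comp il) 0) * T.nm (g.comp ir) 0 by ring]
  exact add_mem (Submodule.mem_sup_right (Ideal.mul_mem_left _ _ hr))
    (Submodule.mem_sup_left (Ideal.mul_mem_right _ _ hl))

theorem shriek_res_mem_sup (hI : T.IsIdeal I) (hJ : T.IsIdeal J) (lam : GSetHom Q (X.sum Y))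
    (g : GSetHom Q V) {x : T.obj X} {y : T.obj Y} (hx : x ∈ I X) (hy : y ∈ J Y) :
    T.shriek g (T.res lam (T.tr (GSet.inl X Y) x + T.tr (GSet.inr X Y) y)) ∈ I V ⊔ J V := by
  refine shriek_mem_sup_of_res_mem hI hJ (GSet.bijective_sumElim_pbSnd lam) g ?_ ?_
  · rw [T.res_comp, map_add, T.tr_bc, T.res_tr_of_isEmpty_pullback _ _
      ⟨fun ⟨⟨_, ω⟩, h⟩ => Sum.inl_ne_inr (ω.property.trans h.symm)⟩, add_zero]
    exact hI.tr_mem _ (hI.res_mem _ hx)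
  · rw [T.res_comp, map_add, T.tr_bc (GSet.inr X Y), T.res_tr_of_isEmpty_pullback _ _
      ⟨fun ⟨⟨_, ω⟩, h⟩ => Sum.inr_ne_inl (ω.property.trans h.symm)⟩, zero_add]
    exact hJ.tr_mem _ (hJ.res_mem _ hy)

theorem tr_mem_sup (hI : T.IsIdeal I) (hJ : T.IsIdeal J) (f : GSetHom X Y) {x : T.obj X}
    (hx : x ∈ I X ⊔ J X) : T.tr f x ∈ I Y ⊔ J Y := by
  obtain ⟨u, hu, v, hv, rfl⟩ := Submodule.mem_sup.mp hx
  rw [map_add]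
  exact add_mem (Submodule.mem_sup_left (hI.tr_mem f hu)) (Submodule.mem_sup_right (hJ.tr_mem f hv))

theorem shriek_add_mem_sup (hI : T.IsIdeal I) (hJ : T.IsIdeal J) (f : GSetHom X Y)
    {x y : T.obj X} (hx : x ∈ I X) (hy : y ∈ J X) : T.shriek f (x + y) ∈ I Y ⊔ J Y := by
  set w := T.tr (GSet.inl X X) x + T.tr (GSet.inr X X) y
  have hw : T.tr (GSet.fold X) w = x + y := by
    rw [map_add, T.tr_comp, T.tr_comp]
    exact congrArg₂ (· + ·) (T.tr_id x) (T.tr_id y)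
  have hdistrib : T.shriek f (x + y) = T.tr (GSet.piPr f (GSet.fold X))
      (T.shriek (GSet.pbSnd f (GSet.piPr f (GSet.fold X)))
        (T.res (GSet.piEval f (GSet.fold X)) w)) := by
    rw [shriek, shriek, map_sub, ← T.distrib, hw, ← (T.res (GSet.piEval f (GSet.fold X))).map_zero,
      ← T.distrib, (T.tr (GSet.fold X)).map_zero]
  rw [hdistrib]
  exact tr_mem_sup hI hJ _ (shriek_res_mem_sup hI hJ _ _ hx hy)

theorem IsIdeal.sup (hI : T.IsIdeal I) (hJ : T.IsIdeal J) : T.IsIdeal fun X => I X ⊔ J X where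
  res_mem f y hy := by
    obtain ⟨u, hu, v, hv, rfl⟩ := Submodule.mem_sup.mp hy
    rw [map_add]
    exact add_mem (Submodule.mem_sup_left (hI.res_mem f hu))
      (Submodule.mem_sup_right (hJ.res_mem f hv))
  tr_mem f _ hx := tr_mem_sup hI hJ f hx
  shriek_mem f x hx := by
    obtain ⟨u, hu, v, hv, rfl⟩ := Submodule.mem_sup.mp hx
    exact shriek_add_mem_sup hI hJ f hu hv

variable (T)

theorem mem_gen_iff (S : ∀ X : GSet G, Set (T.obj X)) {x : T.obj X} :
    x ∈ T.gen S X ↔ ∀ I : ∀ Y : GSet G, Ideal (T.obj Y), T.IsIdeal I → (∀ Y, S Y ⊆ I Y) →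
      x ∈ I X := by
  simp only [gen, Submodule.mem_iInf]

theorem isIdeal_gen (S : ∀ X : GSet G, Set (T.obj X)) : T.IsIdeal (T.gen S) where
  res_mem f _ hy := (T.mem_gen_iff S).2 fun I hI hS => hI.res_mem f ((T.mem_gen_iff S).1 hy I hI hS)
  tr_mem f _ hx := (T.mem_gen_iff S).2 fun I hI hS => hI.tr_mem f ((T.mem_gen_iff S).1 hx I hI hS)
  shriek_mem f _ hx :=
    (T.mem_gen_iff S).2 fun I hI hS => hI.shriek_mem f ((T.mem_gen_iff S).1 hx I hI hS)

theorem mem_principal_self (a : T.obj X) : a ∈ T.principal X a X :=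
  (T.mem_gen_iff _).2 fun _ _ hS => hS X ⟨rfl, rfl⟩

theorem mul_le_mulIdl (Z : GSet G) : I Z * J Z ≤ T.mulIdl I J Z :=
  Ideal.mul_le.2 fun α hα β hβ =>
    Ideal.subset_span ⟨Z, GSetHom.id Z, α, β, hα, hβ, (T.tr_id _).symm⟩

variable {T}

theorem IsMaximal.mem_or_sup_principal_eq_top {M : ∀ X : GSet G, Ideal (T.obj X)}
    (hM : T.IsMaximal M) (a : T.obj X) : a ∈ M X ∨ ∀ Z, M Z ⊔ T.principal X a Z = ⊤ := by
  refine (hM.eq_of_le _ (hM.isIdeal.sup (T.isIdeal_gen _)) fun Z => le_sup_left).imp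
    (fun h => ?_) id
  rw [← congrFun h X]
  exact Submodule.mem_sup_right (T.mem_principal_self a)

end TambaraFunctor

theorem isMaximal_isPrime_general (G : Type) [Group G] (T : TambaraFunctor G)
    (M : ∀ X : GSet G, Ideal (T.obj X)) (hM : T.IsMaximal M) :
    T.IsPrime M := by
  refine ⟨hM.isIdeal, hM.ne_top, fun {X Y} _ _ {a b} hab => ?_⟩
  rcases hM.mem_or_sup_principal_eq_top a with ha | ha
  · exact .inl ha
  rcases hM.mem_or_sup_principal_eq_top b with hb | hb
  · exact .inr hb
  obtain ⟨Z, hZ⟩ := hM.ne_top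
  refine absurd ?_ hZ
  calc M Z = M Z ⊔ T.principal X a Z * T.principal Y b Z :=
        (sup_eq_left.2 ((T.mul_le_mulIdl Z).trans (hab Z))).symm
    _ = M Z ⊔ T.principal Y b Z := Ideal.sup_mul_eq_of_coprime_left (ha Z)
    _ = ⊤ := hb Z

/-- every maximal ideal of a (nonzero) Tambara functor is prime. -/
theorem isMaximal_isPrime (G : Type) [Group G] [Finite G] (T : TambaraFunctor G)
    (hT : ∃ X : GSet G, Nontrivial (T.obj X))
    (M : ∀ X : GSet G, Ideal (T.obj X)) (hM : T.IsMaximal M) :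
    T.IsPrime M :=
  isMaximal_isPrime_general G T M hM
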